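/- Let C ⊆ V be an open set, D a balanced cone of directions spanning the finite-dimensional normed space V, and suppose f : C → ℝ admits at x₀ ∈ C a D-subcone, i.e., there exists a D-convex positively 1-homogeneous function g : V → ℝ with f(y) ≥ f(x₀) + g(y − x₀) for all y ∈ C. Then f has a subdifferential at x₀: there is a linear ℓ : V → ℝ with f(y) ≥ f(x₀) + ℓ(y − x₀) for all y ∈ C. -/

import Mathlib

/-!
Convexity along the directions of `D` makes `g` continuous along every ray: the directions of
`D` reach every vector in finitely many steps, and a convex function of one variable is
controlled near `0` by its values at `±1`. Together with homogeneity this gives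
`g (y + v) ≤ g y + g v` for `v ∈ D`. For a nonzero `d ∈ D`, `t ↦ g (x + t • d) - t * g d` is then
antitone and bounded below; its limit `G ≤ g` is again homogeneous and convex along `D`, and is
affine along `d` with slope `g d`. By induction on the dimension, `G` has a linear minorant on a
hyperplane complementary to `d`, which extends to `V` with slope `g d` along `d`.
-/

open Set Filter Topology

def DConvexOn {V : Type*} [NormedAddCommGroup V] [NormedSpace ℝ V]
    (D S : Set V) (f : V → ℝ) : Prop :=
  ∀ ⦃x y : V⦄, x ∈ S → y ∈ S → x - y ∈ D → segment ℝ x y ⊆ S →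
    ConvexOn ℝ (segment ℝ x y) f

lemma ConvexOn.abs_sub_le_of_abs_le_one {u : ℝ → ℝ} (hu : ConvexOn ℝ univ u) {a : ℝ}
    (ha : |a| ≤ 1) : |u a - u 0| ≤ |a| * (|u 1 - u 0| + |u (-1) - u 0|) := by
  wlog h0 : 0 ≤ a generalizing u a
  · have hneg : ConvexOn ℝ univ (fun s => u (-s)) := hu.comp_linearMap (-LinearMap.id)
    have := this hneg (a := -a) (by rwa [abs_neg]) (by linarith)
    simpa [abs_neg, add_comm] using this
  have hup : u a ≤ (1 - a) * u 0 + a * u 1 := by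
    simpa using hu.2 (mem_univ 0) (mem_univ 1) (by linarith [(abs_le.1 ha).2]) h0 (by ring)
  have hlow : (1 + a) * u 0 ≤ u a + a * u (-1) := by
    have hw : (1 + a)⁻¹ + a / (1 + a) = 1 := by field_simp
    have hpt : (1 + a)⁻¹ • a + (a / (1 + a)) • (-1 : ℝ) = 0 := by
      simp only [smul_eq_mul]; field_simp; ring
    have h := hu.2 (mem_univ a) (mem_univ (-1)) (by positivity) (by positivity) hw
    rw [hpt, smul_eq_mul, smul_eq_mul] at h
    calc (1 + a) * u 0 ≤ (1 + a) * ((1 + a)⁻¹ * u a + a / (1 + a) * u (-1)) := by gcongr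
      _ = u a + a * u (-1) := by field_simp
  rw [abs_of_nonneg h0, abs_le]
  constructor <;> nlinarith [le_abs_self (u 1 - u 0), le_abs_self (u (-1) - u 0),
    abs_nonneg (u 1 - u 0), abs_nonneg (u (-1) - u 0)]

section
variable {V : Type*} [AddCommGroup V] [Module ℝ V] {D : Set V} {g : V → ℝ}

def ConvexAlong (D : Set V) (g : V → ℝ) : Prop :=
  ∀ x, ∀ v ∈ D, ConvexOn ℝ univ fun s : ℝ => g (x + s • v)

def SubadditiveAlong (D : Set V) (g : V → ℝ) : Prop :=
  ∀ x, ∀ v ∈ D, g (x + v) ≤ g x + g v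

def PosHomogeneous (g : V → ℝ) : Prop :=
  ∀ t : ℝ, 0 < t → ∀ x, g (t • x) = t * g x

lemma PosHomogeneous.map_zero (hhom : PosHomogeneous g) : g 0 = 0 := by
  have := hhom 2 two_pos 0
  rw [smul_zero] at this
  linarith

lemma PosHomogeneous.map_smul_of_nonneg (hhom : PosHomogeneous g) {t : ℝ} (ht : 0 ≤ t) (x : V) :
    g (t • x) = t * g x := by
  rcases ht.eq_or_lt with rfl | ht
  · simp [hhom.map_zero]
  · exact hhom t ht x

lemma forall_of_add_of_span_eq_top (hbal : ∀ t : ℝ, ∀ x ∈ D, t • x ∈ D)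
    (hspan : Submodule.span ℝ D = ⊤) {P : V → Prop} (h0 : P 0)
    (hadd : ∀ x, ∀ v ∈ D, P x → P (x + v)) (x : V) : P x := by
  have key : ∀ y ∈ Submodule.span ℝ D, ∀ c : ℝ, ∀ x, P x → P (x + c • y) := by
    intro y hy
    induction hy using Submodule.span_induction with
    | mem v hv => exact fun c x hx => hadd x _ (hbal c v hv) hx
    | zero => simp
    | add y z _ _ hy hz =>
      intro c x hx
      rw [smul_add, ← add_assoc]
      exact hz c _ (hy c x hx)
    | smul r y _ hy =>
      intro c x hx
      rw [smul_smul]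
      exact hy _ x hx
  simpa using key x (hspan ▸ Submodule.mem_top) 1 0 h0

lemma ConvexAlong.tendsto_add_smul (hg : ConvexAlong D g) (hbal : ∀ t : ℝ, ∀ x ∈ D, t • x ∈ D)
    (hspan : Submodule.span ℝ D = ⊤) (p y : V) :
    Tendsto (fun s : ℝ => g (p + s • y)) (𝓝 0) (𝓝 (g p)) := by
  revert p
  refine forall_of_add_of_span_eq_top hbal hspan (P := fun y =>
    ∀ p, Tendsto (fun s : ℝ => g (p + s • y)) (𝓝 0) (𝓝 (g p))) (by simp) ?_ y
  intro y v hv hy p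
  have hshift : ∀ w, Tendsto (fun s : ℝ => g (p + s • y + w)) (𝓝 0) (𝓝 (g (p + w))) :=
    fun w => by simpa only [add_right_comm] using hy (p + w)
  have hbound : Tendsto (fun s : ℝ => |s| * (|g (p + s • y + v) - g (p + s • y)|
      + |g (p + s • y - v) - g (p + s • y)|)) (𝓝 0) (𝓝 0) := by
    have := (continuous_abs.tendsto (0 : ℝ)).mul
      ((((hshift v).sub (hy p)).abs).add (((hshift (-v)).sub (hy p)).abs))
    simpa [← sub_eq_add_neg] using this
  have hstep : Tendsto (fun s : ℝ => g (p + s • y + s • v) - g (p + s • y)) (𝓝 0) (𝓝 0) := by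
    refine squeeze_zero_norm' ?_ hbound
    filter_upwards [Icc_mem_nhds (show (-1 : ℝ) < 0 by norm_num) one_pos] with s hs
    simpa [← sub_eq_add_neg] using (hg (p + s • y) v hv).abs_sub_le_of_abs_le_one (abs_le.2 hs)
  simpa [smul_add, add_assoc] using (hy p).add hstep

lemma ConvexAlong.subadditiveAlong (hg : ConvexAlong D g) (hhom : PosHomogeneous g)
    (hbal : ∀ t : ℝ, ∀ x ∈ D, t • x ∈ D) (hspan : Submodule.span ℝ D = ⊤) :
    SubadditiveAlong D g := by
  intro y v hv
  -- the chord of `r ↦ g (y + r • v)` over `[0, s⁻¹]`, rescaled by homogeneity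
  have hchord : ∀ s ∈ Ioc (0 : ℝ) 1, g (y + v) - g y ≤ g (s • y + v) - s * g y := by
    rintro s ⟨hs0, hs1⟩
    have h := (hg y v hv).2 (mem_univ 0) (mem_univ s⁻¹) (sub_nonneg.2 hs1) hs0.le (by ring)
    have hscale : g (s • y + v) = s * g (y + s⁻¹ • v) := by
      rw [← hhom s hs0, smul_add, smul_inv_smul₀ hs0.ne']
    simp only [smul_eq_mul, mul_zero, zero_add, mul_inv_cancel₀ hs0.ne', one_smul,
      zero_smul, add_zero] at h
    linarith
  have hlim : Tendsto (fun s : ℝ => g (s • y + v) - s * g y) (𝓝[>] 0) (𝓝 (g v - 0 * g y)) := by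
    refine (((hg.tendsto_add_smul hbal hspan v y).mono_left nhdsWithin_le_nhds).congr
      fun s => by rw [add_comm]).sub ?_
    exact (tendsto_nhdsWithin_of_tendsto_nhds (continuous_id.tendsto 0)).mul_const _
  have := ge_of_tendsto hlim (eventually_of_mem (Ioc_mem_nhdsGT one_pos) hchord)
  linarith

def rayDefect (g : V → ℝ) (d x : V) (t : ℝ) : ℝ := g (x + t • d) - t * g d

noncomputable def flattenAlong (g : V → ℝ) (d x : V) : ℝ := ⨅ t, rayDefect g d x t

section flattenAlong
variable {d : V}

lemma antitone_rayDefect (hhom : PosHomogeneous g) (hsub : SubadditiveAlong D g)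
    (hbal : ∀ t : ℝ, ∀ x ∈ D, t • x ∈ D) (hd : d ∈ D) (x : V) : Antitone (rayDefect g d x) := by
  intro t t' htt'
  have h := hsub (x + t • d) ((t' - t) • d) (hbal _ d hd)
  rw [hhom.map_smul_of_nonneg (sub_nonneg.2 htt'), add_assoc, ← add_smul,
    add_sub_cancel] at h
  simp only [rayDefect]
  linarith

lemma bddBelow_range_rayDefect (hhom : PosHomogeneous g) (hsub : SubadditiveAlong D g)
    (hbal : ∀ t : ℝ, ∀ x ∈ D, t • x ∈ D) (hspan : Submodule.span ℝ D = ⊤) (hd : d ∈ D)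
    (x : V) : BddBelow (range (rayDefect g d x)) := by
  refine forall_of_add_of_span_eq_top hbal hspan (P := fun x => BddBelow (range (rayDefect g d x)))
    ⟨0, ?_⟩ ?_ x
  · rintro _ ⟨t, rfl⟩
    calc 0 = rayDefect g d 0 |t| := by
          simp [rayDefect, hhom.map_smul_of_nonneg (abs_nonneg t)]
      _ ≤ rayDefect g d 0 t := antitone_rayDefect hhom hsub hbal hd 0 (le_abs_self t)
  · rintro x v hv ⟨m, hm⟩
    refine ⟨m - g (-v), ?_⟩
    rintro _ ⟨t, rfl⟩
    have h1 := hm ⟨t, rfl⟩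
    have h2 := hsub (x + v + t • d) (-v) (by simpa using hbal (-1) v hv)
    rw [show x + v + t • d + -v = x + t • d by abel] at h2
    simp only [rayDefect] at h1 ⊢
    linarith

lemma tendsto_rayDefect_flattenAlong (hhom : PosHomogeneous g) (hsub : SubadditiveAlong D g)
    (hbal : ∀ t : ℝ, ∀ x ∈ D, t • x ∈ D) (hspan : Submodule.span ℝ D = ⊤) (hd : d ∈ D)
    (x : V) : Tendsto (rayDefect g d x) atTop (𝓝 (flattenAlong g d x)) :=
  tendsto_atTop_ciInf (antitone_rayDefect hhom hsub hbal hd x)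
    (bddBelow_range_rayDefect hhom hsub hbal hspan hd x)

lemma flattenAlong_le (hhom : PosHomogeneous g) (hsub : SubadditiveAlong D g)
    (hbal : ∀ t : ℝ, ∀ x ∈ D, t • x ∈ D) (hspan : Submodule.span ℝ D = ⊤) (hd : d ∈ D)
    (x : V) : flattenAlong g d x ≤ g x := by
  calc flattenAlong g d x ≤ rayDefect g d x 0 :=
        ciInf_le (bddBelow_range_rayDefect hhom hsub hbal hspan hd x) 0
    _ = g x := by simp [rayDefect]

lemma flattenAlong_smul (hhom : PosHomogeneous g)
    (hlim : ∀ x, Tendsto (rayDefect g d x) atTop (𝓝 (flattenAlong g d x))) {c : ℝ} (hc : 0 < c)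
    (x : V) : flattenAlong g d (c • x) = c * flattenAlong g d x := by
  have hscale : (fun t => rayDefect g d (c • x) (c * t)) = fun t => c * rayDefect g d x t := by
    ext t
    rw [rayDefect, rayDefect, ← smul_smul, ← smul_add, hhom c hc]
    ring
  have h : Tendsto (fun t => rayDefect g d (c • x) (c * t)) atTop _ :=
    (hlim (c • x)).comp (tendsto_id.const_mul_atTop hc)
  rw [hscale] at h
  exact tendsto_nhds_unique h ((hlim x).const_mul c)

lemma flattenAlong_add_smul
    (hlim : ∀ x, Tendsto (rayDefect g d x) atTop (𝓝 (flattenAlong g d x))) (x : V) (c : ℝ) :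
    flattenAlong g d (x + c • d) = flattenAlong g d x + c * g d := by
  have hshift : rayDefect g d (x + c • d) = fun t => rayDefect g d x (t + c) + c * g d := by
    ext t
    rw [rayDefect, rayDefect, add_assoc, ← add_smul, add_comm c]
    ring
  have h := (hlim x).comp (tendsto_atTop_add_const_right _ c tendsto_id)
  exact tendsto_nhds_unique (hlim (x + c • d)) (hshift ▸ h.add_const (c * g d))

lemma convexOn_flattenAlong {v : V} (hv : ∀ z, ConvexOn ℝ univ fun s : ℝ => g (z + s • v))
    (hlim : ∀ x, Tendsto (rayDefect g d x) atTop (𝓝 (flattenAlong g d x))) (x : V) :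
    ConvexOn ℝ univ fun s : ℝ => flattenAlong g d (x + s • v) := by
  refine ⟨convex_univ, fun s₁ _ s₂ _ a b ha hb hab => ?_⟩
  have hray : ∀ t, rayDefect g d (x + (a • s₁ + b • s₂) • v) t ≤
      a • rayDefect g d (x + s₁ • v) t + b • rayDefect g d (x + s₂ • v) t := by
    intro t
    have h := (hv (x + t • d)).2 (mem_univ s₁) (mem_univ s₂) ha hb hab
    simp only [rayDefect, smul_eq_mul] at h ⊢
    rw [add_right_comm _ (t • d), add_right_comm _ (t • d), add_right_comm _ (t • d)] at h
    linear_combination h + t * g d * hab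
  exact le_of_tendsto_of_tendsto' (hlim _) (((hlim _).const_smul a).add ((hlim _).const_smul b))
    hray

end flattenAlong

section kerProj
variable {τ : V →ₗ[ℝ] ℝ} {d : V}

def kerProj (τ : V →ₗ[ℝ] ℝ) (d : V) (hτ : τ d = 1) : V →ₗ[ℝ] LinearMap.ker τ :=
  (LinearMap.id - τ.smulRight d).codRestrict (LinearMap.ker τ) fun x => by simp [hτ]

lemma coe_kerProj (hτ : τ d = 1) (x : V) : (kerProj τ d hτ x : V) = x - τ x • d := rfl

lemma kerProj_coe (hτ : τ d = 1) (w : LinearMap.ker τ) : kerProj τ d hτ w = w := by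
  ext
  simp [coe_kerProj, LinearMap.mem_ker.1 w.2]

lemma span_image_kerProj (hτ : τ d = 1) (hspan : Submodule.span ℝ D = ⊤) :
    Submodule.span ℝ (kerProj τ d hτ '' D) = ⊤ := by
  rw [Submodule.span_image, hspan, Submodule.map_top, LinearMap.range_eq_top]
  exact fun w => ⟨w, kerProj_coe hτ w⟩

lemma ConvexAlong.flattenAlong_kerProj (hg : ConvexAlong D g)
    (hlim : ∀ x, Tendsto (rayDefect g d x) atTop (𝓝 (flattenAlong g d x))) (hτ : τ d = 1) :
    ConvexAlong (kerProj τ d hτ '' D) fun w : LinearMap.ker τ => flattenAlong g d w := by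
  rintro w _ ⟨v, hv, rfl⟩
  have hline : (fun s : ℝ => flattenAlong g d ↑(w + s • kerProj τ d hτ v)) =
      fun s => flattenAlong g d (w + s • v) + (-(τ v * g d)) * s := by
    ext s
    rw [Submodule.coe_add, Submodule.coe_smul, coe_kerProj, smul_sub, smul_smul, sub_eq_add_neg,
      ← add_assoc, ← neg_smul, flattenAlong_add_smul hlim]
    ring
  rw [hline]
  exact (convexOn_flattenAlong (hg · v hv) hlim w).add
    ((LinearMap.mulLeft ℝ (-(τ v * g d))).convexOn convex_univ)

lemma le_of_le_flattenAlong_kerProj (hτ : τ d = 1)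
    (hlim : ∀ x, Tendsto (rayDefect g d x) atTop (𝓝 (flattenAlong g d x)))
    (hle : ∀ x, flattenAlong g d x ≤ g x) {ℓ : LinearMap.ker τ →ₗ[ℝ] ℝ}
    (hℓ : ∀ w, ℓ w ≤ flattenAlong g d w) (x : V) : (ℓ ∘ₗ kerProj τ d hτ + g d • τ) x ≤ g x := by
  have hx : (kerProj τ d hτ x : V) + τ x • d = x := by rw [coe_kerProj, sub_add_cancel]
  calc (ℓ ∘ₗ kerProj τ d hτ + g d • τ) x = ℓ (kerProj τ d hτ x) + τ x * g d := by
        simp [mul_comm]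
    _ ≤ flattenAlong g d (kerProj τ d hτ x) + τ x * g d := by gcongr; exact hℓ _
    _ = flattenAlong g d x := by rw [← flattenAlong_add_smul hlim, hx]
    _ ≤ g x := hle x

end kerProj

theorem ConvexAlong.exists_linearMap_le [FiniteDimensional ℝ V] (hg : ConvexAlong D g)
    (hhom : PosHomogeneous g) (hbal : ∀ t : ℝ, ∀ x ∈ D, t • x ∈ D)
    (hspan : Submodule.span ℝ D = ⊤) : ∃ ℓ : V →ₗ[ℝ] ℝ, ∀ x, ℓ x ≤ g x := by
  induction hn : Module.finrank ℝ V using Nat.strong_induction_on generalizing V with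
  | _ n ih =>
  by_cases hD : ∀ d ∈ D, d = 0
  · refine ⟨0, fun x => ?_⟩
    have hx : x ∈ Submodule.span ℝ D := hspan ▸ Submodule.mem_top
    rw [Submodule.span_eq_bot.2 hD, Submodule.mem_bot] at hx
    simp [hx, hhom.map_zero]
  push Not at hD
  obtain ⟨d, hdD, hd0⟩ := hD
  obtain ⟨τ, hτ⟩ := Module.Projective.exists_dual_eq_one ℝ hd0
  have hsub := hg.subadditiveAlong hhom hbal hspan
  have hlim := tendsto_rayDefect_flattenAlong hhom hsub hbal hspan hdD
  have hker : LinearMap.ker τ ≠ ⊤ := fun h => by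
    simpa [hτ] using LinearMap.mem_ker.1 (h ▸ Submodule.mem_top : d ∈ LinearMap.ker τ)
  obtain ⟨ℓ, hℓ⟩ := ih _ (hn ▸ Submodule.finrank_lt hker) (hg.flattenAlong_kerProj hlim hτ)
    (fun c hc w => by simp [flattenAlong_smul hhom hlim hc])
    (by rintro t _ ⟨v, hv, rfl⟩; exact ⟨t • v, hbal t v hv, map_smul _ t v⟩)
    (span_image_kerProj hτ hspan) rfl
  exact ⟨_, le_of_le_flattenAlong_kerProj hτ hlim (flattenAlong_le hhom hsub hbal hspan hdD) hℓ⟩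

end

lemma DConvexOn.convexAlong {V : Type*} [NormedAddCommGroup V] [NormedSpace ℝ V] {D : Set V}
    {g : V → ℝ} (hg : DConvexOn D univ g) (hbal : ∀ t : ℝ, ∀ x ∈ D, t • x ∈ D) :
    ConvexAlong D g := by
  intro x v hv
  refine ⟨convex_univ, fun s₁ _ s₂ _ a b ha hb hab => ?_⟩
  have hD : (x + s₁ • v) - (x + s₂ • v) ∈ D := by
    rw [add_sub_add_left_eq_sub, ← sub_smul]
    exact hbal _ v hv
  have h := (hg (mem_univ _) (mem_univ _) hD (subset_univ _)).2 (left_mem_segment ℝ _ _)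
    (right_mem_segment ℝ _ _) ha hb hab
  have hpt : a • (x + s₁ • v) + b • (x + s₂ • v) = x + (a • s₁ + b • s₂) • v := by
    match_scalars <;> simp only [smul_eq_mul, mul_one]
    linarith
  rwa [hpt] at h

theorem subcone_implies_subdifferential_general
    {V : Type*} [NormedAddCommGroup V] [NormedSpace ℝ V] [FiniteDimensional ℝ V]
    (D : Set V) (hDbal : ∀ (t : ℝ), ∀ x ∈ D, t • x ∈ D)
    (hDspan : Submodule.span ℝ D = ⊤)
    (C : Set V)
    (f : V → ℝ) (x₀ : V)
    (g : V → ℝ) (hg : DConvexOn D Set.univ g)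
    (hghom : ∀ t : ℝ, 0 < t → ∀ x : V, g (t • x) = t * g x)
    (hsub : ∀ y ∈ C, f x₀ + g (y - x₀) ≤ f y) :
    ∃ ℓ : V →ₗ[ℝ] ℝ, ∀ y ∈ C, f x₀ + ℓ (y - x₀) ≤ f y := by
  obtain ⟨ℓ, hℓ⟩ := (hg.convexAlong hDbal).exists_linearMap_le hghom hDbal hDspan
  exact ⟨ℓ, fun y hy => (add_le_add_right (hℓ _) _).trans (hsub y hy)⟩

/-- Proposition: D-subcone implies subdifferential: if `f` admits
at `x₀` a D-convex positively 1-homogeneous minorant cone, then `f` admits a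
linear subdifferential at `x₀`. -/
theorem subcone_implies_subdifferential
    {V : Type*} [NormedAddCommGroup V] [NormedSpace ℝ V] [FiniteDimensional ℝ V]
    (D : Set V) (hDbal : ∀ (t : ℝ), ∀ x ∈ D, t • x ∈ D)
    (hDspan : Submodule.span ℝ D = ⊤)
    (C : Set V) (hCopen : IsOpen C)
    (f : V → ℝ) (x₀ : V) (hx₀ : x₀ ∈ C)
    (g : V → ℝ) (hg : DConvexOn D Set.univ g)
    (hghom : ∀ t : ℝ, 0 < t → ∀ x : V, g (t • x) = t * g x)
    (hsub : ∀ y ∈ C, f x₀ + g (y - x₀) ≤ f y) :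
    ∃ ℓ : V →ₗ[ℝ] ℝ, ∀ y ∈ C, f x₀ + ℓ (y - x₀) ≤ f y :=
  subcone_implies_subdifferential_general D hDbal hDspan C f x₀ g hg hghom hsub
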